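/- arXiv:2403.13219 — 5 statements merged into one kernel-verified Lean document; each statement's English description precedes it below -/
import Mathlib

section
/- Let ν be a probability measure on ℝ^D, let h > 0 and α ∈ ℝ, and let φ(x'|x) denote the density of the Gaussian N(αx, h·I_D) at x', so that ∇_{x'} log φ(x'|x) = −(x' − αx)/h. Define the noised density p(x') = ∫ φ(x'|x) dν(x), which is everywhere positive. Assume differentiation under the integral sign is valid, i.e. ∇p(x') = ∫ ∇_{x'} φ(x'|x) dν(x) for every x'. Then for every measurable s : ℝ^D → ℝ^D such that ∫ ‖s(x')‖₂² p(x') dx' < ∞ and ∫∫ ‖∇_{x'} log φ(x'|x)‖₂² φ(x'|x) dx' dν(x) < ∞ and ∫ ‖∇ log p(x')‖₂² p(x') dx' < ∞, one has ∫ ‖∇ log p(x') − s(x')‖₂² p(x') dx' = ∫∫ ‖∇_{x'} log φ(x'|x) − s(x')‖₂² φ(x'|x) dx' dν(x) + C, where C = ∫ ‖∇ log p(x')‖₂² p(x') dx' − ∫∫ ‖∇_{x'} log φ(x'|x)‖₂² φ(x'|x) dx' dν(x) does not depend on s. -/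
open MeasureTheory Real

/-! Expand both squares with `‖a - s‖² w = ‖a‖² w - 2⟪s, w • a⟫ + ‖s‖² w`. The terms free of `s`
make up the constant. The terms quadratic in `s` agree by Fubini since `p = ∫ φ dν`, and the cross
terms agree since `p ∇log p = ∇p = ∫ ∇φ dν = ∫ φ ∇log φ dν`. Integrability of every piece comes
from the assumed ones through `2|⟪s, a⟫| ≤ ‖s‖² + ‖a‖²`. -/

theorem integral_sub_two_mul_add {α : Type*} [MeasurableSpace α] {μ : Measure α}
    {f g k : α → ℝ} (hf : Integrable f μ) (hg : Integrable g μ) (hk : Integrable k μ) :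
    ∫ x, (f x - 2 * g x + k x) ∂μ = ∫ x, f x ∂μ - 2 * ∫ x, g x ∂μ + ∫ x, k x ∂μ := by
  rw [integral_add (f := fun x => f x - 2 * g x) (hf.sub (hg.const_mul 2)) hk,
    integral_sub hf (hg.const_mul 2), integral_const_mul]

theorem integrable_prod_norm_sq_mul {X E F : Type*} [MeasurableSpace X] [MeasurableSpace E]
    [NormedAddCommGroup F] {ν : Measure X} {μ : Measure E} [SFinite ν] [SFinite μ]
    {w : E → X → ℝ} {p : E → ℝ} {s : E → F} (hw_nonneg : ∀ x' x, 0 ≤ w x' x)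
    (hw : StronglyMeasurable fun q : X × E => w q.2 q.1) (hw_int : ∀ x', Integrable (w x') ν)
    (hp : ∀ x', p x' = ∫ x, w x' x ∂ν) (hs : StronglyMeasurable s)
    (hint_s : Integrable (fun x' => ‖s x'‖ ^ 2 * p x') μ) :
    Integrable (fun q : X × E => ‖s q.2‖ ^ 2 * w q.2 q.1) (ν.prod μ) := by
  have hmeas := ((hs.comp_measurable measurable_snd).norm.pow 2).mul hw
  refine (integrable_prod_iff' (f := fun q : X × E => ‖s q.2‖ ^ 2 * w q.2 q.1)
    hmeas.aestronglyMeasurable).2 ⟨ae_of_all _ fun x' => (hw_int x').const_mul (‖s x'‖ ^ 2),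
      hint_s.congr (ae_of_all _ fun x' => ?_)⟩
  simp only [norm_of_nonneg (mul_nonneg (sq_nonneg _) (hw_nonneg _ _))]
  rw [integral_const_mul, hp]

section ScoreMatching

variable {X E : Type*} [NormedAddCommGroup E] [InnerProductSpace ℝ E]

theorem norm_sub_sq_mul_eq (a s : E) (w : ℝ) :
    ‖a - s‖ ^ 2 * w = ‖a‖ ^ 2 * w - 2 * inner ℝ s (w • a) + ‖s‖ ^ 2 * w := by
  rw [norm_sub_sq_real, real_inner_smul_right, real_inner_comm]
  ring

theorem abs_inner_smul_le_half_add {w : ℝ} (hw : 0 ≤ w) (a s : E) :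
    |inner ℝ s (w • a)| ≤ (‖a‖ ^ 2 * w + ‖s‖ ^ 2 * w) / 2 := by
  rw [real_inner_smul_right, abs_mul, abs_of_nonneg hw]
  nlinarith [abs_real_inner_le_norm s a, mul_nonneg hw (sq_nonneg (‖a‖ - ‖s‖))]

theorem norm_smul_le_half_add {w : ℝ} (hw : 0 ≤ w) (a : E) : ‖w • a‖ ≤ (w + ‖a‖ ^ 2 * w) / 2 := by
  rw [norm_smul, norm_of_nonneg hw]
  nlinarith [mul_nonneg hw (sq_nonneg (‖a‖ - 1))]

variable [CompleteSpace E] [MeasurableSpace X] [MeasurableSpace E]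
  {ν : Measure X} {μ : Measure E} [SFinite ν] [SFinite μ]
  {w : E → X → ℝ} {v : E → X → E} {p : E → ℝ} {P s : E → E}

theorem ae_integral_inner_smul_eq (hw_nonneg : ∀ x' x, 0 ≤ w x' x)
    (hw : StronglyMeasurable fun q : X × E => w q.2 q.1)
    (hv : StronglyMeasurable fun q : X × E => v q.2 q.1) (hw_int : ∀ x', Integrable (w x') ν)
    (hP : ∀ x', P x' = ∫ x, w x' x • v x' x ∂ν)
    (hint_v : Integrable (fun q : X × E => ‖v q.2 q.1‖ ^ 2 * w q.2 q.1) (ν.prod μ)) :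
    ∀ᵐ x' ∂μ, ∫ x, inner ℝ (s x') (w x' x • v x' x) ∂ν = inner ℝ (s x') (P x') := by
  filter_upwards [hint_v.prod_left_ae] with x' hx'
  have hsection : Integrable (fun x => w x' x • v x' x) ν :=
    (((hw_int x').add hx').div_const 2).mono'
      ((hw.smul hv).comp_measurable measurable_prodMk_right).aestronglyMeasurable
      (ae_of_all _ fun x => norm_smul_le_half_add (hw_nonneg _ _) _)
  rw [hP, integral_inner hsection]

/-- `w x' x` stands for `φ(x'|x)`, `v x' x` for `∇_{x'} log φ(x'|x)` and `P` for `∇p`, so that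
`(p x')⁻¹ • P x'` is the score `∇ log p`. -/
theorem score_matching_eq_denoising_score_matching_add
    (hw_nonneg : ∀ x' x, 0 ≤ w x' x)
    (hw : StronglyMeasurable fun q : X × E => w q.2 q.1)
    (hv : StronglyMeasurable fun q : X × E => v q.2 q.1)
    (hp : ∀ x', p x' = ∫ x, w x' x ∂ν) (hp_ne : ∀ x', p x' ≠ 0)
    (hP : ∀ x', P x' = ∫ x, w x' x • v x' x ∂ν)
    (hs : StronglyMeasurable s)
    (hint_s : Integrable (fun x' => ‖s x'‖ ^ 2 * p x') μ)
    (hint_v : Integrable (fun q : X × E => ‖v q.2 q.1‖ ^ 2 * w q.2 q.1) (ν.prod μ))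
    (hint_score : Integrable (fun x' => ‖(p x')⁻¹ • P x'‖ ^ 2 * p x') μ) :
    ∫ x', ‖(p x')⁻¹ • P x' - s x'‖ ^ 2 * p x' ∂μ
      = (∫ x, ∫ x', ‖v x' x - s x'‖ ^ 2 * w x' x ∂μ ∂ν)
        + ((∫ x', ‖(p x')⁻¹ • P x'‖ ^ 2 * p x' ∂μ)
            - ∫ x, ∫ x', ‖v x' x‖ ^ 2 * w x' x ∂μ ∂ν) := by
  -- a non-integrable section would have Bochner integral `0 = p x'`
  have hw_int : ∀ x', Integrable (w x') ν := fun x' =>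
    Integrable.of_integral_ne_zero (hp x' ▸ hp_ne x')
  have hsq_int := integrable_prod_norm_sq_mul hw_nonneg hw hw_int hp hs hint_s
  have hsq_eq : ∫ q, ‖s q.2‖ ^ 2 * w q.2 q.1 ∂(ν.prod μ) = ∫ x', ‖s x'‖ ^ 2 * p x' ∂μ := by
    rw [integral_prod_symm _ hsq_int]
    simp only [integral_const_mul, ← hp]
  have hcross_int : Integrable (fun q : X × E => inner ℝ (s q.2) (w q.2 q.1 • v q.2 q.1))
      (ν.prod μ) :=
    ((hint_v.add hsq_int).div_const 2).mono'
      ((hs.comp_measurable measurable_snd).inner (hw.smul hv)).aestronglyMeasurable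
      (ae_of_all _ fun q => abs_inner_smul_le_half_add (hw_nonneg _ _) _ _)
  have hcross_ae := ae_integral_inner_smul_eq (s := s) hw_nonneg hw hv hw_int hP hint_v
  have hcross_eq : ∫ q, inner ℝ (s q.2) (w q.2 q.1 • v q.2 q.1) ∂(ν.prod μ)
      = ∫ x', inner ℝ (s x') (P x') ∂μ := by
    rw [integral_prod_symm _ hcross_int]
    exact integral_congr_ae hcross_ae
  have hL : ∫ x', ‖(p x')⁻¹ • P x' - s x'‖ ^ 2 * p x' ∂μ
      = ∫ x', ‖(p x')⁻¹ • P x'‖ ^ 2 * p x' ∂μ - 2 * ∫ x', inner ℝ (s x') (P x') ∂μ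
        + ∫ x', ‖s x'‖ ^ 2 * p x' ∂μ := by
    simp only [norm_sub_sq_mul_eq, smul_inv_smul₀ (hp_ne _)]
    exact integral_sub_two_mul_add hint_score
      (hcross_int.integral_prod_right.congr hcross_ae) hint_s
  have hint_dsm : Integrable (fun q : X × E => ‖v q.2 q.1 - s q.2‖ ^ 2 * w q.2 q.1)
      (ν.prod μ) := by
    simp only [norm_sub_sq_mul_eq]
    exact (hint_v.sub (hcross_int.const_mul 2)).add hsq_int
  have hR : ∫ x, ∫ x', ‖v x' x - s x'‖ ^ 2 * w x' x ∂μ ∂ν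
      = ∫ x, ∫ x', ‖v x' x‖ ^ 2 * w x' x ∂μ ∂ν - 2 * ∫ x', inner ℝ (s x') (P x') ∂μ
        + ∫ x', ‖s x'‖ ^ 2 * p x' ∂μ := by
    rw [← integral_prod _ hint_v, ← integral_prod _ hint_dsm, ← hcross_eq, ← hsq_eq,
      ← integral_sub_two_mul_add hint_v hcross_int hsq_int]
    simp only [norm_sub_sq_mul_eq]
  rw [hL, hR]
  ring

end ScoreMatching

theorem hasGradientAt_gaussian {E : Type*} [NormedAddCommGroup E] [InnerProductSpace ℝ E]
    [CompleteSpace E] (c h : ℝ) (b x : E) :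
    HasGradientAt (fun y => c * exp (-‖y - b‖ ^ 2 / (2 * h)))
      ((c * exp (-‖x - b‖ ^ 2 / (2 * h))) • (-(1 / h)) • (x - b)) x := by
  rw [hasGradientAt_iff_hasFDerivAt]
  have hsq := ((hasFDerivAt_id x).sub_const b).norm_sq
  refine (((hsq.neg.mul_const (2 * h)⁻¹).exp).const_mul c).congr_fderiv ?_
  ext v
  simp only [id_eq, Pi.neg_apply, mul_inv_rev, neg_mul, map_sub, ContinuousLinearMap.comp_id,
    smul_neg, neg_apply, smul_apply, sub_apply, coe_innerSL_apply, nsmul_eq_mul, Nat.cast_ofNat,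
    smul_eq_mul, div_eq_mul_inv, one_mul, neg_smul, map_neg, map_smul,
    InnerProductSpace.toDual_apply_apply, neg_inj]
  ring

/-- **Denoising score matching equivalence (Proposition 1).** Let `ν` be a
probability measure on `ℝ^D`, `h > 0`, `α ∈ ℝ`, and let `φ(x'|x)` be the density
of `N(αx, h·I_D)`, so `∇_{x'} log φ(x'|x) = −(x' − αx)/h`. With noised density
`p(x') = ∫ φ(x'|x) dν(x)` (everywhere positive), score `∇ log p = ∇p/p`, and
differentiation under the integral sign, for every measurable `s` with the
stated square-integrability,
`∫‖∇log p − s‖² p = ∫∫‖∇log φ − s‖² φ dν + C`, where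
`C = ∫‖∇log p‖² p − ∫∫‖∇log φ‖² φ dν` does not depend on `s`. -/
theorem denoising_score_matching_equivalence (D : ℕ)
    (ν : Measure (EuclideanSpace ℝ (Fin D))) [IsProbabilityMeasure ν]
    (h α : ℝ) (hh : 0 < h)
    (φ : EuclideanSpace ℝ (Fin D) → EuclideanSpace ℝ (Fin D) → ℝ)
    (hφ : ∀ x' x, φ x' x
      = (2 * π * h) ^ (-(D : ℝ) / 2) * Real.exp (-‖x' - α • x‖ ^ 2 / (2 * h)))
    (p : EuclideanSpace ℝ (Fin D) → ℝ)
    (hp : ∀ x', p x' = ∫ x, φ x' x ∂ν)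
    (hppos : ∀ x', 0 < p x')
    (hdiff_under_int : ∀ x',
      gradient p x' = ∫ x, gradient (fun y => φ y x) x' ∂ν)
    (s : EuclideanSpace ℝ (Fin D) → EuclideanSpace ℝ (Fin D))
    (hs : Measurable s)
    (hint_s : Integrable (fun x' => ‖s x'‖ ^ 2 * p x') volume)
    (hint_φ : Integrable
      (fun q : EuclideanSpace ℝ (Fin D) × EuclideanSpace ℝ (Fin D) =>
        ‖(-(1 / h)) • (q.2 - α • q.1)‖ ^ 2 * φ q.2 q.1) (ν.prod volume))
    (hint_p : Integrable (fun x' => ‖(p x')⁻¹ • gradient p x'‖ ^ 2 * p x') volume) :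
    (∫ x', ‖(p x')⁻¹ • gradient p x' - s x'‖ ^ 2 * p x')
      = (∫ x, ∫ x', ‖(-(1 / h)) • (x' - α • x) - s x'‖ ^ 2 * φ x' x ∂volume ∂ν)
        + ((∫ x', ‖(p x')⁻¹ • gradient p x'‖ ^ 2 * p x')
            - ∫ x, ∫ x', ‖(-(1 / h)) • (x' - α • x)‖ ^ 2 * φ x' x ∂volume ∂ν) := by
  obtain rfl : φ = fun x' x =>
      (2 * π * h) ^ (-(D : ℝ) / 2) * exp (-‖x' - α • x‖ ^ 2 / (2 * h)) :=
    funext fun x' => funext (hφ x')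
  refine score_matching_eq_denoising_score_matching_add (fun _ _ => by positivity)
    (by fun_prop : Continuous _).stronglyMeasurable (by fun_prop : Continuous _).stronglyMeasurable
    hp (fun x' => (hppos x').ne') (fun x' => ?_) hs.stronglyMeasurable hint_s hint_φ hint_p
  rw [hdiff_under_int]
  exact integral_congr_ae (ae_of_all _ fun x => (hasGradientAt_gaussian _ _ _ _).gradient)
end

section
/- Let A ∈ ℝ^{D×d} satisfy AᵀA = I_d, and write x_∥ = AAᵀx and x_⊥ = (I_D − AAᵀ)x. Let g* : ℝ^D → ℝ and h* : ℝ → ℝ with h*(r) ≤ 0 for all r and h*(0) = 0, and set f*(x) = g*(x_∥) + h*(‖x_⊥‖₂). Let f̂ : ℝ^D → ℝ. Let P_a and P be probability measures on ℝ^D such that P_a is supported on the column span of A (i.e. (I_D − AAᵀ)x = 0 for P_a-almost every x), ∫ f̂ dP_a = a, and all the integrals below are finite. Then a − ∫ f*(x) dP(x) ≤ ∫ |f̂(x) − g*(x)| dP_a(x) + |∫ g*(x_∥) dP_a(x) − ∫ g*(x_∥) dP(x)| + ∫ (−h*(‖x_⊥‖₂)) dP(x). -/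
/-!
On the support of `P_a` we have `x = x_∥`, so `∫ g*(x_∥) dP_a = ∫ g* dP_a`. Hence
`a − ∫ f* dP` telescopes into `(∫ f̂ dP_a − ∫ g* dP_a) + (∫ g*(x_∥) dP_a − ∫ g*(x_∥) dP)
+ ∫ (−h*(‖x_⊥‖)) dP`, and the first two summands are bounded by the triangle inequality.
-/

open Matrix MeasureTheory

/-- Reinterpret a plain vector as an element of Euclidean space (definitionally
equal; this fixes the ℓ² norm). -/
noncomputable def toE {k : ℕ} (v : Fin k → ℝ) : EuclideanSpace ℝ (Fin k) := WithLp.toLp 2 v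

/-- The on-support projection `x_∥ = AAᵀx`. -/
noncomputable def projPar {D d : ℕ} (A : Matrix (Fin D) (Fin d) ℝ)
    (x : EuclideanSpace ℝ (Fin D)) : EuclideanSpace ℝ (Fin D) :=
  toE (A.mulVec (Aᵀ.mulVec x))

theorem integral_sub_integral_le_integral_abs_sub {α : Type*} [MeasurableSpace α]
    {μ : Measure α} {f g : α → ℝ}
    (hf : Integrable f μ) (hg : Integrable g μ) :
    ∫ x, f x ∂μ - ∫ x, g x ∂μ ≤ ∫ x, |f x - g x| ∂μ :=
  calc ∫ x, f x ∂μ - ∫ x, g x ∂μ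
      = ∫ x, (f x - g x) ∂μ := (integral_sub hf hg).symm
    _ ≤ |∫ x, (f x - g x) ∂μ| := le_abs_self _
    _ ≤ ∫ x, |f x - g x| ∂μ := abs_integral_le_integral_abs

theorem suboptimality_decomposition_general (D d : ℕ)
    (A : Matrix (Fin D) (Fin d) ℝ)
    (gstar : EuclideanSpace ℝ (Fin D) → ℝ) (hstar : ℝ → ℝ)
    (fhat : EuclideanSpace ℝ (Fin D) → ℝ)
    (Pa P : Measure (EuclideanSpace ℝ (Fin D)))
    (a : ℝ)
    (hsupp : ∀ᵐ x ∂Pa, x - projPar A x = 0)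
    (hfa : (∫ x, fhat x ∂Pa) = a)
    (hint_fhat : Integrable fhat Pa)
    (hint_g_Pa : Integrable gstar Pa)
    (hint_gpar_P : Integrable (fun x => gstar (projPar A x)) P)
    (hint_h_P : Integrable (fun x => hstar ‖x - projPar A x‖) P) :
    a - (∫ x, (gstar (projPar A x) + hstar ‖x - projPar A x‖) ∂P)
      ≤ (∫ x, |fhat x - gstar x| ∂Pa)
        + |(∫ x, gstar (projPar A x) ∂Pa) - ∫ x, gstar (projPar A x) ∂P|
        + ∫ x, (-hstar ‖x - projPar A x‖) ∂P := by
  have on_support : ∫ x, gstar (projPar A x) ∂Pa = ∫ x, gstar x ∂Pa :=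
    integral_congr_ae <| hsupp.mono fun x hx => congrArg gstar (sub_eq_zero.mp hx).symm
  have bandit_regret := integral_sub_integral_le_integral_abs_sub hint_fhat hint_g_Pa
  have on_support_error := le_abs_self
    ((∫ x, gstar (projPar A x) ∂Pa) - ∫ x, gstar (projPar A x) ∂P)
  rw [integral_add hint_gpar_P hint_h_P, integral_neg, ← hfa]
  linarith

/-- **Suboptimality decomposition (Proposition 2).** With `f*(x) = g*(x_∥) +
h*(‖x_⊥‖₂)`, `h* ≤ 0`, `h*(0) = 0`, target conditional distribution `P_a`
supported on the column span of `A` with `∫ f̂ dP_a = a`, and generated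
distribution `P`:
`a − ∫ f* dP ≤ ∫|f̂ − g*| dP_a + |∫ g*(x_∥) dP_a − ∫ g*(x_∥) dP| + ∫ (−h*(‖x_⊥‖₂)) dP`. -/
theorem suboptimality_decomposition (D d : ℕ)
    (A : Matrix (Fin D) (Fin d) ℝ) (hA : Aᵀ * A = 1)
    (gstar : EuclideanSpace ℝ (Fin D) → ℝ) (hstar : ℝ → ℝ)
    (hstar_nonpos : ∀ r, hstar r ≤ 0) (hstar_zero : hstar 0 = 0)
    (fhat : EuclideanSpace ℝ (Fin D) → ℝ)
    (Pa P : Measure (EuclideanSpace ℝ (Fin D)))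
    [IsProbabilityMeasure Pa] [IsProbabilityMeasure P]
    (a : ℝ)
    (hsupp : ∀ᵐ x ∂Pa, x - projPar A x = 0)
    (hfa : (∫ x, fhat x ∂Pa) = a)
    (hint_fhat : Integrable fhat Pa)
    (hint_g_Pa : Integrable gstar Pa)
    (hint_gpar_Pa : Integrable (fun x => gstar (projPar A x)) Pa)
    (hint_absdiff : Integrable (fun x => |fhat x - gstar x|) Pa)
    (hint_gpar_P : Integrable (fun x => gstar (projPar A x)) P)
    (hint_h_P : Integrable (fun x => hstar ‖x - projPar A x‖) P) :
    a - (∫ x, (gstar (projPar A x) + hstar ‖x - projPar A x‖) ∂P)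
      ≤ (∫ x, |fhat x - gstar x| ∂Pa)
        + |(∫ x, gstar (projPar A x) ∂Pa) - ∫ x, gstar (projPar A x) ∂P|
        + ∫ x, (-hstar ‖x - projPar A x‖) ∂P :=
  suboptimality_decomposition_general D d A gstar hstar fhat Pa P a hsupp hfa hint_fhat hint_g_Pa
    hint_gpar_P hint_h_P
end

section
/- Let V, A ∈ ℝ^{D×d} satisfy VᵀV = AᵀA = I_d, and let U ∈ ℝ^{d×d} be orthogonal (UᵀU = I_d). Then | ‖VU − A‖_F² − ‖U − VᵀA‖_F² | = | Tr(AAᵀ(VVᵀ − AAᵀ)) |, and this quantity is at most d·√(2d)·‖VVᵀ − AAᵀ‖_F, where ‖·‖_F denotes the Frobenius norm. -/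
open Matrix

/-- Frobenius norm of a real matrix. -/
noncomputable def froNorm {m n : ℕ} (M : Matrix (Fin m) (Fin n) ℝ) : ℝ :=
  Real.sqrt (∑ i, ∑ j, (M i j) ^ 2)

lemma sum_sq_eq_trace {m n : ℕ} (M : Matrix (Fin m) (Fin n) ℝ) :
    (∑ i, ∑ j, (M i j) ^ 2) = (Mᵀ * M).trace := by
  simp only [Matrix.trace, Matrix.diag, Matrix.mul_apply, Matrix.transpose_apply, sq]
  exact Finset.sum_comm

lemma froNorm_sq {m n : ℕ} (M : Matrix (Fin m) (Fin n) ℝ) :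
    froNorm M ^ 2 = (Mᵀ * M).trace := by
  rw [froNorm, Real.sq_sqrt (by positivity), sum_sq_eq_trace]

/-- **Key estimate in Lemma 7 (lmm:VU_A).** For `V, A ∈ ℝ^{D×d}` with orthonormal
columns and `U ∈ ℝ^{d×d}` orthogonal,
`| ‖VU − A‖_F² − ‖U − VᵀA‖_F² | = | Tr(AAᵀ(VVᵀ − AAᵀ)) | ≤ d·√(2d)·‖VVᵀ − AAᵀ‖_F`. -/
theorem frobenius_rotation_estimate (D d : ℕ)
    (V A : Matrix (Fin D) (Fin d) ℝ) (U : Matrix (Fin d) (Fin d) ℝ)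
    (hV : Vᵀ * V = 1) (hA : Aᵀ * A = 1) (hU : Uᵀ * U = 1) :
    |froNorm (V * U - A) ^ 2 - froNorm (U - Vᵀ * A) ^ 2|
      = |(A * Aᵀ * (V * Vᵀ - A * Aᵀ)).trace| ∧
    |(A * Aᵀ * (V * Vᵀ - A * Aᵀ)).trace|
      ≤ d * Real.sqrt (2 * d) * froNorm (V * Vᵀ - A * Aᵀ) := by
  set t : ℝ := (Uᵀ * (Vᵀ * A)).trace with ht
  set s : ℝ := (Aᵀ * (V * (Vᵀ * A))).trace with hs
  -- first norm
  have e1 : (V * U - A)ᵀ * (V * U - A)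
      = Uᵀ * ((Vᵀ * V) * U) - Uᵀ * (Vᵀ * A) - ((Aᵀ * V) * U - Aᵀ * A) := by
    simp only [Matrix.transpose_sub, Matrix.transpose_mul, Matrix.sub_mul, Matrix.mul_sub,
      Matrix.mul_assoc]
    abel
  have trAVU : ((Aᵀ * V) * U).trace = t := by
    rw [ht, ← Matrix.trace_transpose ((Aᵀ * V) * U)]
    congr 1
    simp [Matrix.transpose_mul, Matrix.mul_assoc]
  have h1 : froNorm (V * U - A) ^ 2 = 2 * d - 2 * t := by
    rw [froNorm_sq, e1]
    rw [hV, Matrix.one_mul, hU, hA]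
    simp only [Matrix.trace_sub, trAVU, Matrix.trace_one]
    simp [Fintype.card_fin]
    ring
  -- second norm
  have e2 : (U - Vᵀ * A)ᵀ * (U - Vᵀ * A)
      = Uᵀ * U - Uᵀ * (Vᵀ * A) - ((Aᵀ * V) * U - Aᵀ * (V * (Vᵀ * A))) := by
    simp only [Matrix.transpose_sub, Matrix.transpose_mul, Matrix.sub_mul, Matrix.mul_sub,
      Matrix.mul_assoc, Matrix.transpose_transpose]
    abel
  have h2 : froNorm (U - Vᵀ * A) ^ 2 = d - 2 * t + s := by
    rw [froNorm_sq, e2, hU]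
    simp only [Matrix.trace_sub, trAVU, Matrix.trace_one]
    simp [Fintype.card_fin, ht, hs]
    ring
  -- the trace on the RHS
  have trace_eq : (A * Aᵀ * (V * Vᵀ - A * Aᵀ)).trace = s - d := by
    have c1 : (A * Aᵀ * (V * Vᵀ)).trace = s := by
      rw [Matrix.mul_assoc, Matrix.trace_mul_comm A (Aᵀ * (V * Vᵀ))]
      rw [hs]
      congr 1
      simp [Matrix.mul_assoc]
    have c2 : (A * Aᵀ * (A * Aᵀ)).trace = (d : ℝ) := by
      have : A * Aᵀ * (A * Aᵀ) = A * Aᵀ := by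
        calc A * Aᵀ * (A * Aᵀ) = A * ((Aᵀ * A) * Aᵀ) := by simp [Matrix.mul_assoc]
        _ = A * Aᵀ := by rw [hA, Matrix.one_mul]
      rw [this, Matrix.trace_mul_comm, hA, Matrix.trace_one]
      simp
    rw [Matrix.mul_sub, Matrix.trace_sub, c1, c2]
  constructor
  · rw [h1, h2, trace_eq]
    rw [show 2 * (d:ℝ) - 2 * t - ((d:ℝ) - 2 * t + s) = -(s - d) by ring, abs_neg]
  · rw [trace_eq]
    -- Cauchy–Schwarz
    set P : Matrix (Fin D) (Fin D) ℝ := A * Aᵀ with hP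
    set M : Matrix (Fin D) (Fin D) ℝ := V * Vᵀ - A * Aᵀ with hM
    have hMsymm : Mᵀ = M := by
      simp [hM, Matrix.transpose_sub, Matrix.transpose_mul]
    have htr : s - (d : ℝ) = (P * M).trace := by
      rw [← trace_eq, hP, hM]
    have expand : (P * M).trace = ∑ i, ∑ j, P i j * M i j := by
      simp only [Matrix.trace, Matrix.diag, Matrix.mul_apply]
      refine Finset.sum_congr rfl fun i _ => Finset.sum_congr rfl fun j _ => ?_
      have : M j i = M i j := by simpa using congrFun (congrFun hMsymm i) j
      rw [this]
    have sumP : (∑ i, ∑ j, (P i j) ^ 2) = (d : ℝ) := by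
      rw [sum_sq_eq_trace]
      have hPT : Pᵀ = P := by simp [hP, Matrix.transpose_mul]
      rw [hPT]
      have : P * P = P := by
        calc P * P = A * ((Aᵀ * A) * Aᵀ) := by simp [hP, Matrix.mul_assoc]
        _ = P := by rw [hA, Matrix.one_mul, hP]
      rw [this, hP, Matrix.trace_mul_comm, hA, Matrix.trace_one]
      simp
    have sumM : (∑ i, ∑ j, (M i j) ^ 2) = froNorm M ^ 2 := by
      rw [froNorm_sq, sum_sq_eq_trace]
    -- Cauchy–Schwarz over the product type
    have cs : ((P * M).trace) ^ 2 ≤ (d : ℝ) * froNorm M ^ 2 := by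
      rw [expand, ← sumP, ← sumM]
      have h := Finset.sum_mul_sq_le_sq_mul_sq (Finset.univ : Finset (Fin D × Fin D))
        (fun p => P p.1 p.2) (fun p => M p.1 p.2)
      simpa [Fintype.sum_prod_type] using h
    have hfro : 0 ≤ froNorm M := Real.sqrt_nonneg _
    have habs : |(P * M).trace| ≤ Real.sqrt d * froNorm M := by
      rw [← Real.sqrt_sq_eq_abs]
      calc Real.sqrt ((P * M).trace ^ 2) ≤ Real.sqrt ((d : ℝ) * froNorm M ^ 2) :=
            Real.sqrt_le_sqrt cs
        _ = Real.sqrt d * froNorm M := by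
            rw [Real.sqrt_mul (by positivity), Real.sqrt_sq hfro]
    have hstep : Real.sqrt d ≤ d * Real.sqrt (2 * d) := by
      rcases Nat.eq_zero_or_pos d with hd | hd
      · simp [hd]
      · have hd1 : (1:ℝ) ≤ d := by exact_mod_cast hd
        have h1 : Real.sqrt d ≤ d := by
          calc Real.sqrt d ≤ Real.sqrt ((d:ℝ)^2) := Real.sqrt_le_sqrt (by nlinarith)
          _ = d := Real.sqrt_sq (by positivity)
        have h2 : (1:ℝ) ≤ Real.sqrt (2 * d) := by
          rw [show (1:ℝ) = Real.sqrt 1 from (Real.sqrt_one).symm]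
          exact Real.sqrt_le_sqrt (by linarith)
        calc Real.sqrt d ≤ d := h1
        _ = d * 1 := by ring
        _ ≤ d * Real.sqrt (2 * d) := by
            apply mul_le_mul_of_nonneg_left h2 (by positivity)
    rw [htr]
    calc |(P*M).trace| ≤ Real.sqrt d * froNorm M := habs
    _ ≤ (d * Real.sqrt (2 * d)) * froNorm M := by
        apply mul_le_mul_of_nonneg_right hstep hfro
end

section
/- Let Σ ∈ ℝ^{d×d} be symmetric positive semidefinite, let S ∈ ℝ^{d×d} be symmetric positive definite, let β ∈ ℝ^d, a ∈ ℝ, and ν > 0, and set c = βᵀΣβ + ν² > 0. Then Tr( S^{-1} ( (a²/c²)·ΣββᵀΣ + Σ − (1/c)·ΣββᵀΣ ) ) ≤ (a²/c²)·‖Σ^{1/2} S^{-1} Σ^{1/2}‖_op · (βᵀΣβ) + Tr( Σ^{1/2} S^{-1} Σ^{1/2} ), where Σ^{1/2} is the positive semidefinite square root of Σ and ‖·‖_op the spectral norm. -/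
/-!
With `Q = Σ^{1/2}`, `M = Q S⁻¹ Q` and `w = Qβ`, cyclicity of the trace turns `Tr(S⁻¹Σ)` into
`Tr M` and `Tr(S⁻¹ΣββᵀΣ)` into the quadratic form `wᵀMw`, while `‖w‖² = βᵀΣβ`. Since `M` is
positive semidefinite, the term `-(1/c)·wᵀMw` is nonpositive and can be dropped, and the
remaining `wᵀMw` is at most `‖M‖_op‖w‖²`.
-/

open Matrix

noncomputable def opNorm {d : ℕ} (M : Matrix (Fin d) (Fin d) ℝ) : ℝ :=
  ‖Matrix.toEuclideanCLM (𝕜 := ℝ) M‖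

noncomputable def Matrix.PosSemidef.sqrt {n : Type*} [Fintype n] [DecidableEq n]
    {A : Matrix n n ℝ} (hA : A.PosSemidef) : Matrix n n ℝ :=
  hA.1.eigenvectorUnitary.1 * diagonal ((↑) ∘ (√·) ∘ hA.1.eigenvalues) *
  (star hA.1.eigenvectorUnitary : Matrix n n ℝ)

namespace Matrix

section Algebra

variable {n R : Type*} [Fintype n] [CommSemiring R]

lemma trace_mul_mul_vecMulVec_mul (B A C : Matrix n n R) (u v : n → R) :
    (B * (A * vecMulVec u v * C)).trace = (v ᵥ* C) ⬝ᵥ B *ᵥ (A *ᵥ u) := by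
  rw [mul_vecMulVec, vecMulVec_mul, mul_vecMulVec, trace_vecMulVec, mulVec_mulVec,
    dotProduct_comm]

lemma dotProduct_transpose_mul_mul_mulVec (Q B : Matrix n n R) (x y : n → R) :
    x ⬝ᵥ (Qᵀ * B * Q) *ᵥ y = (Q *ᵥ x) ⬝ᵥ B *ᵥ (Q *ᵥ y) := by
  rw [← mulVec_mulVec, ← mulVec_mulVec, dotProduct_mulVec, vecMul_transpose]

end Algebra

namespace PosSemidef

variable {n : Type*} [Fintype n] [DecidableEq n] {A : Matrix n n ℝ}

lemma posSemidef_sqrt (hA : A.PosSemidef) : hA.sqrt.PosSemidef := by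
  unfold sqrt
  have hD : (diagonal ((↑) ∘ (√·) ∘ hA.1.eigenvalues) : Matrix n n ℝ).PosSemidef :=
    posSemidef_diagonal_iff.mpr fun _ => Real.sqrt_nonneg _
  simpa [star_eq_conjTranspose] using
    hD.mul_mul_conjTranspose_same (hA.1.eigenvectorUnitary : Matrix n n ℝ)

lemma transpose_sqrt (hA : A.PosSemidef) : hA.sqrtᵀ = hA.sqrt := by
  simpa [conjTranspose_eq_transpose_of_trivial] using hA.posSemidef_sqrt.isHermitian.eq

lemma sqrt_mul_self (hA : A.PosSemidef) : hA.sqrt * hA.sqrt = A := by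
  set U : Matrix n n ℝ := hA.1.eigenvectorUnitary.1
  set D : Matrix n n ℝ := diagonal ((↑) ∘ (√·) ∘ hA.1.eigenvalues)
  have hUU : star U * U = 1 := Unitary.coe_star_mul_self hA.1.eigenvectorUnitary
  have hDD : D * D = diagonal ((↑) ∘ hA.1.eigenvalues) := by
    rw [diagonal_mul_diagonal]
    congr 1
    funext i
    simp [Real.mul_self_sqrt (hA.eigenvalues_nonneg i)]
  calc hA.sqrt * hA.sqrt = U * (D * (star U * U) * D) * star U := by
        simp only [sqrt, U, D, Matrix.mul_assoc]
    _ = A := by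
        rw [hUU, Matrix.mul_one, hDD]
        conv_rhs => rw [hA.1.spectral_theorem, Unitary.conjStarAlgAut_apply]
        rfl

end PosSemidef

end Matrix

open scoped RealInnerProductSpace in
lemma dotProduct_mulVec_le_opNorm_mul {d : ℕ} (M : Matrix (Fin d) (Fin d) ℝ) (w : Fin d → ℝ) :
    w ⬝ᵥ M *ᵥ w ≤ opNorm M * (w ⬝ᵥ w) := by
  set x : EuclideanSpace ℝ (Fin d) := WithLp.toLp 2 w
  set T := toEuclideanCLM (𝕜 := ℝ) M
  have hquad : w ⬝ᵥ M *ᵥ w = ⟪x, T x⟫ := (inner_toEuclideanCLM M x x).symm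
  have hsq : w ⬝ᵥ w = ‖x‖ ^ 2 := by
    rw [← real_inner_self_eq_norm_sq, EuclideanSpace.inner_toLp_toLp]
    simp
  calc w ⬝ᵥ M *ᵥ w ≤ ‖x‖ * ‖T x‖ := hquad ▸ real_inner_le_norm x (T x)
    _ ≤ ‖x‖ * (‖T‖ * ‖x‖) := by gcongr; exact T.le_opNorm x
    _ = opNorm M * (w ⬝ᵥ w) := by rw [hsq, opNorm]; ring

/-- **Deterministic trace computation of Lemma 4 (lmm:distribution_sft).** For PSD
`S₀ = Σ`, positive definite `S`, `β ∈ ℝ^d`, `a ∈ ℝ`, `ν > 0` and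
`c = βᵀΣβ + ν² > 0`:
`Tr(S⁻¹((a²/c²)ΣββᵀΣ + Σ − (1/c)ΣββᵀΣ)) ≤ (a²/c²)·‖Σ^{1/2}S⁻¹Σ^{1/2}‖_op·(βᵀΣβ) + Tr(Σ^{1/2}S⁻¹Σ^{1/2})`. -/
theorem distribution_shift_trace_bound (d : ℕ)
    (S₀ S : Matrix (Fin d) (Fin d) ℝ)
    (hS₀ : S₀.PosSemidef) (hS : S.PosDef)
    (β : Fin d → ℝ) (a ν : ℝ) (hν : 0 < ν) :
    let c : ℝ := β ⬝ᵥ S₀.mulVec β + ν ^ 2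
    0 < c ∧
    (S⁻¹ * ((a ^ 2 / c ^ 2) • (S₀ * vecMulVec β β * S₀) + S₀
        - (1 / c) • (S₀ * vecMulVec β β * S₀))).trace
      ≤ (a ^ 2 / c ^ 2) * opNorm (hS₀.sqrt * S⁻¹ * hS₀.sqrt) * (β ⬝ᵥ S₀.mulVec β)
        + (hS₀.sqrt * S⁻¹ * hS₀.sqrt).trace := by
  intro c
  have hc : 0 < c := add_pos_of_nonneg_of_pos (by simpa using hS₀.dotProduct_mulVec_nonneg β)
    (by positivity)
  refine ⟨hc, ?_⟩
  set Q := hS₀.sqrt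
  set M := Q * S⁻¹ * Q
  set w := Q *ᵥ β
  have hQ : Qᵀ = Q := hS₀.transpose_sqrt
  have hQQ : Q * Q = S₀ := hS₀.sqrt_mul_self
  have hM : M.PosSemidef := by
    simpa [Q.conjTranspose_eq_transpose_of_trivial, hQ] using
      hS.inv.posSemidef.mul_mul_conjTranspose_same Q
  have hbase : (S⁻¹ * S₀).trace = M.trace := by
    rw [← hQQ, ← Matrix.mul_assoc, trace_mul_comm, ← Matrix.mul_assoc]
  have hshift : (S⁻¹ * (S₀ * vecMulVec β β * S₀)).trace = w ⬝ᵥ M *ᵥ w := by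
    have hS₀T : S₀ᵀ = S₀ := by rw [← hQQ, transpose_mul, hQ]
    rw [trace_mul_mul_vecMulVec_mul, ← mulVec_transpose, hS₀T, ← hQQ, ← mulVec_mulVec,
      ← dotProduct_transpose_mul_mul_mulVec, hQ]
  have hnorm : w ⬝ᵥ w = β ⬝ᵥ S₀ *ᵥ β := by
    rw [← hQQ, ← mulVec_mulVec, dotProduct_mulVec β Q, ← mulVec_transpose, hQ]
  simp only [Matrix.mul_sub, Matrix.mul_add, mul_smul_comm, trace_sub, trace_add, trace_smul,
    smul_eq_mul, hbase, hshift, ← hnorm]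
  have hquad_nonneg : 0 ≤ w ⬝ᵥ M *ᵥ w := by simpa using hM.dotProduct_mulVec_nonneg w
  calc _ ≤ a ^ 2 / c ^ 2 * (w ⬝ᵥ M *ᵥ w) + M.trace := by
        have : 0 ≤ 1 / c * (w ⬝ᵥ M *ᵥ w) := by positivity
        linarith
    _ ≤ _ := by
        rw [mul_assoc]
        gcongr
        exact dotProduct_mulVec_le_opNorm_mul M w
end

section
/- Let λ > 0, X ∈ ℝ^{n×D}, θ* ∈ ℝ^D, η ∈ ℝ^n, define V_λ = XᵀX + λI_D and θ̂ = V_λ^{-1}Xᵀ(Xθ* + η). Let P be a probability measure on ℝ^D with ∫‖x‖₂² dP(x) < ∞ and Σ_P = ∫ x xᵀ dP(x). Then ∫ |xᵀ(θ̂ − θ*)| dP(x) ≤ √(Tr(V_λ^{-1} Σ_P)) · ( ‖Xᵀη‖_{V_λ^{-1}} + √λ·‖θ*‖₂ ), where for a positive definite matrix M, ‖v‖_M := √(vᵀMv). -/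
open Matrix MeasureTheory

/-!
Write `V = XᵀX + λI`. Since `θ̂ − θ* = V⁻¹Xᵀη − λV⁻¹θ*`, Cauchy–Schwarz in the `V⁻¹` inner product
bounds `|xᵀ(θ̂ − θ*)|` pointwise by `‖x‖_{V⁻¹} (‖Xᵀη‖_{V⁻¹} + λ‖θ*‖_{V⁻¹})`, and `λV⁻¹ ≤ I` turns
the last term into `√λ‖θ*‖₂`. Integrating, Jensen gives `E‖x‖_{V⁻¹} ≤ √(E‖x‖²_{V⁻¹})`, and
`E xᵀV⁻¹x = Tr(V⁻¹Σ_P)`.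
-/

namespace Matrix

variable {ι m : Type*}

theorem PosSemidef.posDef_add_smul_one [DecidableEq ι] {A : Matrix ι ι ℝ} (hA : A.PosSemidef)
    {l : ℝ} (hl : 0 < l) : (A + l • 1).PosDef :=
  PosDef.posSemidef_add hA (PosDef.one.smul hl)

variable [Fintype ι]

theorem posSemidef_transpose_mul_self [Fintype m] (X : Matrix m ι ℝ) : (Xᵀ * X).PosSemidef := by
  simpa using posSemidef_conjTranspose_mul_self X

theorem dotProduct_mulVec_eq_sum_mul (A : Matrix ι ι ℝ) (x : ι → ℝ) :
    x ⬝ᵥ A *ᵥ x = ∑ i, ∑ j, A i j * (x j * x i) := by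
  simp only [dotProduct, mulVec, Finset.mul_sum]
  exact Finset.sum_congr rfl fun i _ => Finset.sum_congr rfl fun j _ => by ring

theorem PosSemidef.abs_dotProduct_mulVec_le {M : Matrix ι ι ℝ} (hM : M.PosSemidef)
    (u v : ι → ℝ) :
    |u ⬝ᵥ M *ᵥ v| ≤ √(u ⬝ᵥ M *ᵥ u) * √(v ⬝ᵥ M *ᵥ v) := by
  classical
  have hnonneg (w : ι → ℝ) : 0 ≤ w ⬝ᵥ M *ᵥ w := by simpa using hM.dotProduct_mulVec_nonneg w
  have hcs := M.toBilin'.apply_mul_apply_le_of_forall_zero_le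
    (fun w => by simpa only [toBilin'_apply'] using hnonneg w) u v
  have hsymm : v ⬝ᵥ M *ᵥ u = u ⬝ᵥ M *ᵥ v := by
    rw [dotProduct_mulVec, ← mulVec_transpose, (isHermitian_iff_isSymm.mp hM.isHermitian).eq,
      dotProduct_comm]
  rw [toBilin'_apply', toBilin'_apply', toBilin'_apply', toBilin'_apply', hsymm] at hcs
  rw [← Real.sqrt_mul (hnonneg u)]
  exact Real.abs_le_sqrt (by rwa [sq])

variable [DecidableEq ι]

theorem PosSemidef.mul_dotProduct_inv_add_smul_one_mulVec_le {A : Matrix ι ι ℝ}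
    (hA : A.PosSemidef) {l : ℝ} (hl : 0 < l) (θ : ι → ℝ) :
    l * (θ ⬝ᵥ (A + l • 1)⁻¹ *ᵥ θ) ≤ θ ⬝ᵥ θ := by
  set y := (A + l • 1)⁻¹ *ᵥ θ
  have hθ : θ = A *ᵥ y + l • y := by
    have hV : (A + l • 1) *ᵥ y = θ := by
      rw [mulVec_mulVec, mul_nonsing_inv _
        ((A + l • 1).isUnit_iff_isUnit_det.mp (hA.posDef_add_smul_one hl).isUnit), one_mulVec]
    rwa [add_mulVec, smul_mulVec, one_mulVec, eq_comm] at hV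
  have key : θ ⬝ᵥ θ - l * (θ ⬝ᵥ y) = (A *ᵥ y) ⬝ᵥ (A *ᵥ y) + l * (y ⬝ᵥ A *ᵥ y) := by
    nth_rw 1 2 3 [hθ]
    simp only [add_dotProduct, dotProduct_add, smul_dotProduct, dotProduct_smul, smul_eq_mul]
    rw [dotProduct_comm y]
    ring
  have hAy : 0 ≤ (A *ᵥ y) ⬝ᵥ (A *ᵥ y) := by simpa using dotProduct_star_self_nonneg (A *ᵥ y)
  have hyAy : 0 ≤ y ⬝ᵥ A *ᵥ y := by simpa using hA.dotProduct_mulVec_nonneg y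
  nlinarith [mul_nonneg hl.le hyAy]

variable [Fintype m]

noncomputable def ridgeEstimate (X : Matrix m ι ℝ) (l : ℝ) (y : m → ℝ) : ι → ℝ :=
  (Xᵀ * X + l • 1)⁻¹ *ᵥ (Xᵀ *ᵥ y)

theorem ridgeEstimate_sub_eq (X : Matrix m ι ℝ) {l : ℝ} (hl : 0 < l) (θ : ι → ℝ)
    (η : m → ℝ) :
    ridgeEstimate X l (X *ᵥ θ + η) - θ
      = (Xᵀ * X + l • 1)⁻¹ *ᵥ (Xᵀ *ᵥ η) - l • (Xᵀ * X + l • 1)⁻¹ *ᵥ θ := by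
  set V := Xᵀ * X + l • 1
  have hV : IsUnit V.det :=
    V.isUnit_iff_isUnit_det.mp ((posSemidef_transpose_mul_self X).posDef_add_smul_one hl).isUnit
  have hθ : V⁻¹ *ᵥ (V *ᵥ θ) = θ := by rw [mulVec_mulVec, nonsing_inv_mul _ hV, one_mulVec]
  calc V⁻¹ *ᵥ (Xᵀ *ᵥ (X *ᵥ θ + η)) - θ
      = V⁻¹ *ᵥ (Xᵀ *ᵥ (X *ᵥ θ + η)) - V⁻¹ *ᵥ (V *ᵥ θ) := by rw [hθ]
    _ = V⁻¹ *ᵥ (Xᵀ *ᵥ η - l • θ) := by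
        rw [← mulVec_sub, mulVec_add, add_mulVec, smul_mulVec, one_mulVec, mulVec_mulVec]
        abel_nf
    _ = V⁻¹ *ᵥ (Xᵀ *ᵥ η) - l • V⁻¹ *ᵥ θ := by rw [mulVec_sub, mulVec_smul]

theorem abs_dotProduct_ridgeEstimate_sub_le (X : Matrix m ι ℝ) {l : ℝ} (hl : 0 < l)
    (θ : ι → ℝ) (η : m → ℝ) (x : ι → ℝ) :
    |x ⬝ᵥ (ridgeEstimate X l (X *ᵥ θ + η) - θ)|
      ≤ √(x ⬝ᵥ (Xᵀ * X + l • 1)⁻¹ *ᵥ x)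
        * (√((Xᵀ *ᵥ η) ⬝ᵥ (Xᵀ * X + l • 1)⁻¹ *ᵥ (Xᵀ *ᵥ η)) + √l * √(θ ⬝ᵥ θ)) := by
  have hA := posSemidef_transpose_mul_self X
  have hW : (Xᵀ * X + l • 1)⁻¹.PosSemidef := (hA.posDef_add_smul_one hl).inv.posSemidef
  have hshrink : l * √(θ ⬝ᵥ (Xᵀ * X + l • 1)⁻¹ *ᵥ θ) ≤ √l * √(θ ⬝ᵥ θ) := by
    calc l * √(θ ⬝ᵥ (Xᵀ * X + l • 1)⁻¹ *ᵥ θ)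
        = √l * √(l * (θ ⬝ᵥ (Xᵀ * X + l • 1)⁻¹ *ᵥ θ)) := by
          rw [Real.sqrt_mul hl.le, ← mul_assoc, Real.mul_self_sqrt hl.le]
      _ ≤ √l * √(θ ⬝ᵥ θ) := by
          gcongr
          exact hA.mul_dotProduct_inv_add_smul_one_mulVec_le hl θ
  set W := (Xᵀ * X + l • 1)⁻¹
  rw [ridgeEstimate_sub_eq X hl, dotProduct_sub, dotProduct_smul, smul_eq_mul]
  calc |x ⬝ᵥ W *ᵥ (Xᵀ *ᵥ η) - l * x ⬝ᵥ W *ᵥ θ|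
      ≤ |x ⬝ᵥ W *ᵥ (Xᵀ *ᵥ η)| + |l * x ⬝ᵥ W *ᵥ θ| := abs_sub _ _
    _ = |x ⬝ᵥ W *ᵥ (Xᵀ *ᵥ η)| + l * |x ⬝ᵥ W *ᵥ θ| := by rw [abs_mul, abs_of_pos hl]
    _ ≤ √(x ⬝ᵥ W *ᵥ x) * √((Xᵀ *ᵥ η) ⬝ᵥ W *ᵥ (Xᵀ *ᵥ η))
          + l * (√(x ⬝ᵥ W *ᵥ x) * √(θ ⬝ᵥ W *ᵥ θ)) := by
        gcongr <;> exact hW.abs_dotProduct_mulVec_le _ _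
    _ = √(x ⬝ᵥ W *ᵥ x) * (√((Xᵀ *ᵥ η) ⬝ᵥ W *ᵥ (Xᵀ *ᵥ η)) + l * √(θ ⬝ᵥ W *ᵥ θ)) := by ring
    _ ≤ _ := by gcongr

end Matrix

section Jensen

variable {α : Type*} [MeasurableSpace α] {μ : Measure α} {f : α → ℝ}

theorem MeasureTheory.Integrable.sqrt [IsFiniteMeasure μ] (hf : Integrable f μ) :
    Integrable (fun x => √(f x)) μ := by
  refine (hf.abs.add (integrable_const 1)).mono'
    (Real.continuous_sqrt.comp_aestronglyMeasurable hf.1) (.of_forall fun x => ?_)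
  show ‖√(f x)‖ ≤ |f x| + 1
  rw [Real.norm_of_nonneg (Real.sqrt_nonneg _), Real.sqrt_le_left (by positivity)]
  nlinarith [abs_nonneg (f x), le_abs_self (f x)]

theorem integral_sqrt_le_sqrt_integral [IsProbabilityMeasure μ] (hf0 : ∀ᵐ x ∂μ, 0 ≤ f x)
    (hf : Integrable f μ) : ∫ x, √(f x) ∂μ ≤ √(∫ x, f x ∂μ) :=
  Real.strictConcaveOn_sqrt.concaveOn.le_map_integral Real.continuous_sqrt.continuousOn
    isClosed_Ici hf0 hf hf.sqrt

end Jensen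

section SecondMoment

variable {ι : Type*} [Fintype ι] {μ : Measure (ι → ℝ)}

theorem integrable_mul_apply_of_integrable_sum_sq
    (h : Integrable (fun x : ι → ℝ => ∑ k, x k ^ 2) μ) (i j : ι) :
    Integrable (fun x : ι → ℝ => x i * x j) μ := by
  refine h.mono' ((measurable_pi_apply i).mul (measurable_pi_apply j)).aestronglyMeasurable
    (.of_forall fun x => ?_)
  have hle (k : ι) : x k ^ 2 ≤ ∑ k, x k ^ 2 :=
    Finset.single_le_sum (fun k _ => sq_nonneg (x k)) (Finset.mem_univ k)
  rw [Real.norm_eq_abs, abs_mul]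
  nlinarith [two_mul_le_add_sq |x i| |x j|, sq_abs (x i), sq_abs (x j), hle i, hle j]

theorem integrable_dotProduct_mulVec (h : ∀ i j, Integrable (fun x : ι → ℝ => x i * x j) μ)
    (A : Matrix ι ι ℝ) : Integrable (fun x => x ⬝ᵥ A *ᵥ x) μ := by
  simp only [dotProduct_mulVec_eq_sum_mul]
  exact integrable_finsetSum _ fun i _ => integrable_finsetSum _ fun j _ => (h j i).const_mul _

theorem integral_dotProduct_mulVec (h : ∀ i j, Integrable (fun x : ι → ℝ => x i * x j) μ)
    (A : Matrix ι ι ℝ) :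
    ∫ x, x ⬝ᵥ A *ᵥ x ∂μ = (A * of fun i j => ∫ x, x i * x j ∂μ).trace := by
  calc ∫ x, x ⬝ᵥ A *ᵥ x ∂μ = ∫ x, ∑ i, ∑ j, A i j * (x j * x i) ∂μ := by
        simp only [dotProduct_mulVec_eq_sum_mul]
    _ = ∑ i, ∑ j, A i j * ∫ x, x j * x i ∂μ := by
        rw [integral_finsetSum _ fun i _ =>
          integrable_finsetSum _ fun j _ => (h j i).const_mul (A i j)]
        refine Finset.sum_congr rfl fun i _ => ?_
        rw [integral_finsetSum _ fun j _ => (h j i).const_mul (A i j)]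
        exact Finset.sum_congr rfl fun j _ => integral_const_mul _ _
    _ = _ := by simp only [trace, diag, mul_apply, of_apply]

end SecondMoment

/-- **Deterministic skeleton of Lemma 3 (lmm:reg_err).** For `λ > 0`, design
`X ∈ ℝ^{n×D}`, `θ* ∈ ℝ^D`, noise `η ∈ ℝ^n`, `V_λ = XᵀX + λI_D`,
`θ̂ = V_λ⁻¹Xᵀ(Xθ* + η)`, and a probability measure `P` on `ℝ^D` with finite
second moments and second moment matrix `Σ_P = ∫ xxᵀ dP`:
`∫ |xᵀ(θ̂ − θ*)| dP ≤ √(Tr(V_λ⁻¹Σ_P)) · (‖Xᵀη‖_{V_λ⁻¹} + √λ‖θ*‖₂)`. -/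
theorem off_policy_regret_skeleton (n D : ℕ) (l : ℝ) (hl : 0 < l)
    (X : Matrix (Fin n) (Fin D) ℝ) (θstar : Fin D → ℝ) (η : Fin n → ℝ)
    (P : Measure (Fin D → ℝ)) [IsProbabilityMeasure P]
    (hmom : Integrable (fun x => ∑ i, x i ^ 2) P) :
    let Vl : Matrix (Fin D) (Fin D) ℝ := Xᵀ * X + l • 1
    let θhat : Fin D → ℝ := Vl⁻¹.mulVec (Xᵀ.mulVec (X.mulVec θstar + η))
    let SigP : Matrix (Fin D) (Fin D) ℝ := Matrix.of fun i j => ∫ x, x i * x j ∂P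
    (∫ x, |x ⬝ᵥ (θhat - θstar)| ∂P)
      ≤ Real.sqrt ((Vl⁻¹ * SigP).trace)
        * (Real.sqrt ((Xᵀ.mulVec η) ⬝ᵥ Vl⁻¹.mulVec (Xᵀ.mulVec η))
            + Real.sqrt l * Real.sqrt (θstar ⬝ᵥ θstar)) := by
  intro Vl θhat SigP
  have hint := integrable_mul_apply_of_integrable_sum_sq hmom
  have hq_nonneg (x : Fin D → ℝ) : 0 ≤ x ⬝ᵥ Vl⁻¹ *ᵥ x := by
    simpa using ((posSemidef_transpose_mul_self X).posDef_add_smul_one hl).inv.posSemidef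
      |>.dotProduct_mulVec_nonneg x
  have hq_int := integrable_dotProduct_mulVec hint Vl⁻¹
  calc ∫ x, |x ⬝ᵥ (θhat - θstar)| ∂P
      ≤ ∫ x, √(x ⬝ᵥ Vl⁻¹ *ᵥ x) * (√((Xᵀ *ᵥ η) ⬝ᵥ Vl⁻¹ *ᵥ (Xᵀ *ᵥ η)) + √l * √(θstar ⬝ᵥ θstar))
          ∂P :=
        integral_mono_of_nonneg (.of_forall fun _ => abs_nonneg _) (hq_int.sqrt.mul_const _)
          (.of_forall (abs_dotProduct_ridgeEstimate_sub_le X hl θstar η))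
    _ = (∫ x, √(x ⬝ᵥ Vl⁻¹ *ᵥ x) ∂P)
          * (√((Xᵀ *ᵥ η) ⬝ᵥ Vl⁻¹ *ᵥ (Xᵀ *ᵥ η)) + √l * √(θstar ⬝ᵥ θstar)) :=
        integral_mul_const _ _
    _ ≤ √(∫ x, x ⬝ᵥ Vl⁻¹ *ᵥ x ∂P)
          * (√((Xᵀ *ᵥ η) ⬝ᵥ Vl⁻¹ *ᵥ (Xᵀ *ᵥ η)) + √l * √(θstar ⬝ᵥ θstar)) := by
        gcongr
        exact integral_sqrt_le_sqrt_integral (.of_forall hq_nonneg) hq_int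
    _ = _ := by rw [integral_dotProduct_mulVec hint]
end
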